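/- arXiv:1708.03835 — 5 statements merged into one kernel-verified Lean document; each statement's English description precedes it below -/
import Mathlib

section
/- Fix n ≥ 2, a regularization parameter C > 0, labeled points p_j = (x_j, y_j) ∈ ℝ^d × {-1, 1} for j ∈ [n], and an index i ∈ [n]. For every vector w ∈ ℝ^d satisfying ‖w‖₂ ≤ log n and Σ_{j ∈ [n]} max{0, 1 - y_j⟨w, x_j⟩} ≥ n / log n, the ratio of the contribution of point p_i to the full SVM objective satisfies f̃(p_i, w) / (Σ_{j ∈ [n]} f̃(p_j, w)) ≤ 1/n + (log n + ‖x_i‖₂ · (log n)²) / n. -/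
open scoped RealInnerProductSpace

/-- For any `w` in the bounded, non-separating query space, the ratio of the
contribution of point `p i` to the full SVM objective is at most
`1/n + (log n + ‖x i‖ (log n)²)/n`. -/
theorem svm_contribution_ratio_bound (d n : ℕ) (hn : 2 ≤ n) (C : ℝ) (hC : 0 < C)
    (x : Fin n → EuclideanSpace ℝ (Fin d)) (y : Fin n → ℝ)
    (hy : ∀ j, y j = -1 ∨ y j = 1) (i : Fin n)
    (w : EuclideanSpace ℝ (Fin d)) (hw : ‖w‖ ≤ Real.log n)
    (hloss : (n : ℝ) / Real.log n ≤ ∑ j, max 0 (1 - y j * ⟪w, x j⟫)) :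
    (‖w‖ ^ 2 / n + C * max 0 (1 - y i * ⟪w, x i⟫)) /
        (∑ j, (‖w‖ ^ 2 / n + C * max 0 (1 - y j * ⟪w, x j⟫))) ≤
      1 / n + (Real.log n + ‖x i‖ * (Real.log n) ^ 2) / n := by
  set L := Real.log n with hLdef
  have hn1 : (1 : ℝ) < n := by exact_mod_cast Nat.lt_of_lt_of_le one_lt_two hn
  have hL : 0 < L := Real.log_pos hn1
  have hnpos : (0 : ℝ) < n := by linarith
  set m : Fin n → ℝ := fun j => max 0 (1 - y j * ⟪w, x j⟫) with hm
  have hmnn : ∀ j, 0 ≤ m j := fun j => le_max_left _ _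
  set S := ∑ j, m j with hSdef
  have hSpos : 0 < S := lt_of_lt_of_le (div_pos hnpos hL) hloss
  have hD : (∑ j, (‖w‖ ^ 2 / n + C * m j)) = ‖w‖ ^ 2 + C * S := by
    rw [Finset.sum_add_distrib, ← Finset.mul_sum, Finset.sum_const, Finset.card_univ,
      Fintype.card_fin, nsmul_eq_mul]
    field_simp
    rfl
  have hDpos : 0 < ‖w‖ ^ 2 + C * S :=
    add_pos_of_nonneg_of_pos (sq_nonneg _) (mul_pos hC hSpos)
  rw [hD, add_div]
  have h1 : ‖w‖ ^ 2 / n / (‖w‖ ^ 2 + C * S) ≤ 1 / n := by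
    rw [div_div, div_le_div_iff₀ (by positivity) hnpos]
    nlinarith [mul_pos hC hSpos]
  have hmi : m i ≤ 1 + L * ‖x i‖ := by
    have habs : |⟪w, x i⟫| ≤ ‖w‖ * ‖x i‖ := abs_real_inner_le_norm w (x i)
    have hwx : ‖w‖ * ‖x i‖ ≤ L * ‖x i‖ :=
      mul_le_mul_of_nonneg_right hw (norm_nonneg _)
    have h0 : (0 : ℝ) ≤ 1 + L * ‖x i‖ := by positivity
    apply max_le h0
    rcases hy i with h | h <;> rw [h] <;>
      nlinarith [le_abs_self ⟪w, x i⟫, neg_abs_le ⟪w, x i⟫]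
  have h2 : C * m i / (‖w‖ ^ 2 + C * S) ≤ (L + ‖x i‖ * L ^ 2) / n := by
    rw [div_le_div_iff₀ hDpos hnpos]
    have hnLS : (n : ℝ) ≤ L * S := by
      rw [div_le_iff₀ hL] at hloss
      calc (n : ℝ) ≤ S * L := hloss
        _ = L * S := mul_comm _ _
    have step1 : C * m i * n ≤ C * (1 + L * ‖x i‖) * n :=
      mul_le_mul_of_nonneg_right (mul_le_mul_of_nonneg_left hmi hC.le) hnpos.le
    have step2 : C * (1 + L * ‖x i‖) * n ≤ C * (1 + L * ‖x i‖) * (L * S) :=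
      mul_le_mul_of_nonneg_left hnLS (by positivity)
    have step3 : C * (1 + L * ‖x i‖) * (L * S) = (L + ‖x i‖ * L ^ 2) * (C * S) := by ring
    nlinarith [mul_nonneg (by positivity : (0:ℝ) ≤ L + ‖x i‖ * L ^ 2) (sq_nonneg ‖w‖)]
  exact add_le_add h1 h2
end

section
/- (Sensitivity Bounds.) Fix n ≥ 2, a regularization parameter C > 0, and labeled points p_j = (x_j, y_j) ∈ ℝ^d × {-1, 1} for j ∈ [n]. Let Q = {w ∈ ℝ^d : ‖w‖₂ ≤ log n and Σ_{j ∈ [n]} max{0, 1 - y_j⟨w, x_j⟩} ≥ n / log n}, and assume Q is nonempty. Then for every i ∈ [n], the sensitivity s(p_i) = sup_{w ∈ Q} f̃(p_i, w) / (Σ_{j ∈ [n]} f̃(p_j, w)) is bounded above by γ(p_i) = 1/n + (log n + ‖x_i‖₂ · (log n)²) / n. -/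
open scoped RealInnerProductSpace

/-- **Sensitivity Bounds.** The sensitivity
`s(p i) = sup_{w ∈ Q} f̃(p i, w) / (∑ j f̃(p j, w))` over the bounded,
non-separating query space `Q` is at most `γ(p i) = 1/n + (log n + ‖x i‖ (log n)²)/n`. -/
theorem svm_sensitivity_bound (d n : ℕ) (hn : 2 ≤ n) (C : ℝ) (hC : 0 < C)
    (x : Fin n → EuclideanSpace ℝ (Fin d)) (y : Fin n → ℝ)
    (hy : ∀ j, y j = -1 ∨ y j = 1)
    (Q : Set (EuclideanSpace ℝ (Fin d)))
    (hQ : Q = {w | ‖w‖ ≤ Real.log n ∧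
      (n : ℝ) / Real.log n ≤ ∑ j, max 0 (1 - y j * ⟪w, x j⟫)})
    (hQne : Q.Nonempty) (i : Fin n) :
    sSup ((fun w => (‖w‖ ^ 2 / n + C * max 0 (1 - y i * ⟪w, x i⟫)) /
          (∑ j, (‖w‖ ^ 2 / n + C * max 0 (1 - y j * ⟪w, x j⟫)))) '' Q) ≤
      1 / n + (Real.log n + ‖x i‖ * (Real.log n) ^ 2) / n := by
  subst hQ
  have hn' : (2:ℝ) ≤ n := by exact_mod_cast hn
  have hnpos : (0:ℝ) < n := by linarith
  set L := Real.log n with hLdef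
  have hLpos : 0 < L := Real.log_pos (by linarith)
  have hxi : (0:ℝ) ≤ ‖x i‖ := norm_nonneg _
  apply Real.sSup_le
  · rintro r ⟨w, ⟨hw1, hw2⟩, rfl⟩
    set H := ∑ j, max 0 (1 - y j * ⟪w, x j⟫) with hHdef
    have hHlow : (n:ℝ) / L ≤ H := hw2
    have hHpos : 0 < H := lt_of_lt_of_le (div_pos hnpos hLpos) hHlow
    have hS : ∑ j, (‖w‖^2/n + C * max 0 (1 - y j * ⟪w, x j⟫)) = ‖w‖^2 + C * H := by
      rw [Finset.sum_add_distrib, ← Finset.mul_sum, Finset.sum_const, Finset.card_univ,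
        Fintype.card_fin, nsmul_eq_mul, ← hHdef]
      field_simp
    dsimp only
    rw [hS]
    have hSpos : 0 < ‖w‖^2 + C * H := by positivity
    rw [div_le_iff₀ hSpos]
    -- key bounds
    have hw2n : ‖w‖^2 ≤ ‖w‖^2 + C * H := by nlinarith
    have hiy : |y i| = 1 := by rcases hy i with h | h <;> simp [h]
    have hinner : |⟪w, x i⟫| ≤ L * ‖x i‖ := by
      calc |⟪w, x i⟫| ≤ ‖w‖ * ‖x i‖ := abs_real_inner_le_norm _ _
        _ ≤ L * ‖x i‖ := by nlinarith
    have hhi : max 0 (1 - y i * ⟪w, x i⟫) ≤ 1 + L * ‖x i‖ := by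
      apply max_le (by nlinarith)
      have : |y i * ⟪w, x i⟫| ≤ L * ‖x i‖ := by
        rw [abs_mul, hiy, one_mul]; exact hinner
      have := abs_le.mp this
      linarith [this.1]
    have hSlow : C * ((n:ℝ) / L) ≤ ‖w‖^2 + C * H := by nlinarith [sq_nonneg ‖w‖]
    have hnL : C * (n:ℝ) / L ≤ ‖w‖^2 + C * H := by
      rw [mul_div_assoc]; exact hSlow
    have hhi0 : 0 ≤ max 0 (1 - y i * ⟪w, x i⟫) := le_max_left _ _
    -- second piece: C * h_i ≤ ((L + ‖x i‖ L^2)/n) * S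
    have key : C * max 0 (1 - y i * ⟪w, x i⟫) ≤ (L + ‖x i‖ * L^2) / n * (‖w‖^2 + C * H) := by
      have h1 : C * max 0 (1 - y i * ⟪w, x i⟫) ≤ C * (1 + L * ‖x i‖) :=
        mul_le_mul_of_nonneg_left hhi hC.le
      have h2 : C * (1 + L * ‖x i‖) = (L + ‖x i‖ * L^2) / n * (C * n / L) := by
        field_simp
      have h3 : (L + ‖x i‖ * L^2) / n * (C * n / L) ≤
          (L + ‖x i‖ * L^2) / n * (‖w‖^2 + C * H) := by
        apply mul_le_mul_of_nonneg_left hnL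
        positivity
      linarith
    have first : ‖w‖^2 / n ≤ 1 / n * (‖w‖^2 + C * H) := by
      rw [one_div, inv_mul_eq_div]
      have : ‖w‖ ^ 2 ≤ ‖w‖ ^ 2 + C * H := hw2n
      gcongr
    calc ‖w‖^2/n + C * max 0 (1 - y i * ⟪w, x i⟫)
        ≤ 1 / n * (‖w‖^2 + C * H) + (L + ‖x i‖ * L^2) / n * (‖w‖^2 + C * H) := by
          linarith
      _ = (1 / n + (L + ‖x i‖ * L^2) / n) * (‖w‖^2 + C * H) := by ring
  · positivity
end

section
/- (Sum of Sensitivities.) Fix n ≥ 2, a regularization parameter C > 0, and labeled points p_j = (x_j, y_j) ∈ ℝ^d × {-1, 1} for j ∈ [n] with normalized inputs ‖x_j‖₂ ≤ 1 for all j. Let Q = {w ∈ ℝ^d : ‖w‖₂ ≤ log n and Σ_{j ∈ [n]} max{0, 1 - y_j⟨w, x_j⟩} ≥ n / log n}, and assume Q is nonempty. Then the total sensitivity satisfies S(P) = Σ_{i ∈ [n]} s(p_i) ≤ Σ_{i ∈ [n]} (1/n + (log n + ‖x_i‖₂ · (log n)²) / n) ≤ 1 + log n + (log n)². -/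
open scoped RealInnerProductSpace

/-- **Sum of Sensitivities.** With normalized inputs `‖x j‖ ≤ 1`, the total
sensitivity satisfies
`S(P) = ∑ i s(p i) ≤ ∑ i (1/n + (log n + ‖x i‖ (log n)²)/n) ≤ 1 + log n + (log n)²`. -/
theorem svm_total_sensitivity_bound (d n : ℕ) (hn : 2 ≤ n) (C : ℝ) (hC : 0 < C)
    (x : Fin n → EuclideanSpace ℝ (Fin d)) (y : Fin n → ℝ)
    (hy : ∀ j, y j = -1 ∨ y j = 1) (hx : ∀ j, ‖x j‖ ≤ 1)
    (Q : Set (EuclideanSpace ℝ (Fin d)))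
    (hQ : Q = {w | ‖w‖ ≤ Real.log n ∧
      (n : ℝ) / Real.log n ≤ ∑ j, max 0 (1 - y j * ⟪w, x j⟫)})
    (hQne : Q.Nonempty) :
    (∑ i, sSup ((fun w => (‖w‖ ^ 2 / n + C * max 0 (1 - y i * ⟪w, x i⟫)) /
            (∑ j, (‖w‖ ^ 2 / n + C * max 0 (1 - y j * ⟪w, x j⟫)))) '' Q)) ≤
        ∑ i, (1 / n + (Real.log n + ‖x i‖ * (Real.log n) ^ 2) / n) ∧
      (∑ i : Fin n, (1 / n + (Real.log n + ‖x i‖ * (Real.log n) ^ 2) / n)) ≤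
        1 + Real.log n + (Real.log n) ^ 2 := by
  have hn0 : (0:ℝ) < n := by exact_mod_cast Nat.lt_of_lt_of_le Nat.zero_lt_two hn
  have hn0' : (n:ℝ) ≠ 0 := ne_of_gt hn0
  set L := Real.log n with hLdef
  have hL : 0 < L := Real.log_pos (by exact_mod_cast Nat.lt_of_lt_of_le Nat.one_lt_two hn)
  constructor
  · apply Finset.sum_le_sum
    intro i _
    apply csSup_le (hQne.image _)
    rintro r ⟨w, hw, rfl⟩
    rw [hQ] at hw
    obtain ⟨hw1, hw2⟩ := hw
    set H := ∑ j, max 0 (1 - y j * ⟪w, x j⟫) with hH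
    have hHpos : 0 < H := lt_of_lt_of_le (by positivity) hw2
    have hDeq : (∑ j, (‖w‖ ^ 2 / n + C * max 0 (1 - y j * ⟪w, x j⟫)))
        = ‖w‖ ^ 2 + C * H := by
      rw [Finset.sum_add_distrib, ← Finset.mul_sum, Finset.sum_const,
        Finset.card_univ, Fintype.card_fin, nsmul_eq_mul]
      have : (n:ℝ) * (‖w‖ ^ 2 / n) = ‖w‖ ^ 2 := by field_simp
      rw [this]
    dsimp only
    rw [hDeq]
    have hDpos : 0 < ‖w‖ ^ 2 + C * H := by positivity
    rw [add_div]
    have h1 : ‖w‖ ^ 2 / n / (‖w‖ ^ 2 + C * H) ≤ 1 / n := by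
      rw [div_div, div_le_div_iff₀ (by positivity) hn0]
      nlinarith [mul_pos hC hHpos, sq_nonneg ‖w‖]
    have hm : max 0 (1 - y i * ⟪w, x i⟫) ≤ 1 + ‖x i‖ * L := by
      apply max_le (by positivity)
      have habs : |⟪w, x i⟫| ≤ ‖w‖ * ‖x i‖ := abs_real_inner_le_norm w (x i)
      have hyi : |y i| = 1 := by rcases hy i with h | h <;> simp [h]
      have : -(y i * ⟪w, x i⟫) ≤ ‖w‖ * ‖x i‖ := by
        calc -(y i * ⟪w, x i⟫) ≤ |y i * ⟪w, x i⟫| := neg_le_abs _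
          _ = |⟪w, x i⟫| := by rw [abs_mul, hyi, one_mul]
          _ ≤ ‖w‖ * ‖x i‖ := habs
      nlinarith [norm_nonneg (x i)]
    have hDge : C * (n / L) ≤ ‖w‖ ^ 2 + C * H := by
      have : C * (n / L) ≤ C * H := by
        apply mul_le_mul_of_nonneg_left hw2 hC.le
      nlinarith [sq_nonneg ‖w‖]
    have h2 : C * max 0 (1 - y i * ⟪w, x i⟫) / (‖w‖ ^ 2 + C * H)
        ≤ (L + ‖x i‖ * L ^ 2) / n := by
      have key : C * max 0 (1 - y i * ⟪w, x i⟫) / (‖w‖ ^ 2 + C * H)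
          ≤ (C * (1 + ‖x i‖ * L)) / (C * (n / L)) := by
        apply div_le_div₀ (by positivity) (mul_le_mul_of_nonneg_left hm hC.le)
          (by positivity) hDge
      have heq : (C * (1 + ‖x i‖ * L)) / (C * (n / L)) = (L + ‖x i‖ * L ^ 2) / n := by
        field_simp
      linarith [key, heq ▸ key]
    linarith
  · rw [Finset.sum_add_distrib, Finset.sum_const, Finset.card_univ, Fintype.card_fin,
      nsmul_eq_mul]
    have h1 : (n:ℝ) * (1 / n) = 1 := by field_simp
    have h2 : ∑ i : Fin n, (L + ‖x i‖ * L ^ 2) / n ≤ L + L ^ 2 := by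
      calc ∑ i : Fin n, (L + ‖x i‖ * L ^ 2) / n ≤ ∑ i : Fin n, (L + L ^ 2) / n := by
            apply Finset.sum_le_sum
            intro i _
            gcongr (?_ + ?_) / _
            · exact le_refl L
            · nlinarith [hx i, sq_nonneg L]
        _ = L + L ^ 2 := by
            rw [Finset.sum_const, Finset.card_univ, Fintype.card_fin, nsmul_eq_mul]
            field_simp
    linarith
end

section
/- Fix n ≥ 2, a regularization parameter C > 0, and labeled points p_j = (x_j, y_j) ∈ ℝ^d × {-1, 1} for j ∈ [n] with normalized inputs ‖x_j‖₂ ≤ 1 for all j. Let Q = {w ∈ ℝ^d : ‖w‖₂ ≤ log n and Σ_{j ∈ [n]} max{0, 1 - y_j⟨w, x_j⟩} ≥ n / log n}, and assume Q is nonempty. Then there exists a constant c > 0, independent of n, d, C, and the data, such that the total sensitivity satisfies S(P) = Σ_{i ∈ [n]} s(p_i) ≤ c · (log n)², i.e., the total sensitivity is O((log n)²). -/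
open scoped RealInnerProductSpace

/-- There exists a universal constant `c > 0`, independent of `n`, `d`, `C`, and
the data, such that the total sensitivity satisfies `S(P) ≤ c (log n)²`. -/
theorem svm_total_sensitivity_bigO :
    ∃ c : ℝ, 0 < c ∧
      ∀ (d n : ℕ), 2 ≤ n → ∀ (C : ℝ), 0 < C →
        ∀ (x : Fin n → EuclideanSpace ℝ (Fin d)) (y : Fin n → ℝ),
          (∀ j, y j = -1 ∨ y j = 1) → (∀ j, ‖x j‖ ≤ 1) →
          ∀ (Q : Set (EuclideanSpace ℝ (Fin d))),
            Q = {w | ‖w‖ ≤ Real.log n ∧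
              (n : ℝ) / Real.log n ≤ ∑ j, max 0 (1 - y j * ⟪w, x j⟫)} →
            Q.Nonempty →
            (∑ i, sSup ((fun w => (‖w‖ ^ 2 / n + C * max 0 (1 - y i * ⟪w, x i⟫)) /
                (∑ j, (‖w‖ ^ 2 / n + C * max 0 (1 - y j * ⟪w, x j⟫)))) '' Q)) ≤
              c * (Real.log n) ^ 2 := by
  refine ⟨7, by norm_num, ?_⟩
  intro d n hn C hC x y hy hx Q hQ hQne
  set L := Real.log n with hLdef
  have h1n : (1 : ℝ) < n := by exact_mod_cast Nat.lt_of_lt_of_le one_lt_two hn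
  have hnpos : (0 : ℝ) < n := by linarith
  have hL : 0 < L := Real.log_pos h1n
  have hL2 : (1 : ℝ) / 2 ≤ L := by
    have h2 : Real.log 2 ≤ L := by
      apply Real.log_le_log (by norm_num)
      exact_mod_cast hn
    nlinarith [Real.log_two_gt_d9]
  set B : ℝ := (1 + (1 + L) * L) / n with hBdef
  have hBnn : 0 ≤ B := by positivity
  -- bound each sSup by B
  have key : ∀ i : Fin n,
      sSup ((fun w => (‖w‖ ^ 2 / n + C * max 0 (1 - y i * ⟪w, x i⟫)) /
        (∑ j, (‖w‖ ^ 2 / n + C * max 0 (1 - y j * ⟪w, x j⟫)))) '' Q) ≤ B := by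
    intro i
    apply Real.sSup_le _ hBnn
    rintro a ⟨w, hwQ, rfl⟩
    rw [hQ] at hwQ
    obtain ⟨hw1, hw2⟩ := hwQ
    set D : ℝ := ∑ j, (‖w‖ ^ 2 / n + C * max 0 (1 - y j * ⟪w, x j⟫)) with hDdef
    have hhinge_nn : ∀ j, 0 ≤ max 0 (1 - y j * ⟪w, x j⟫) := fun j => le_max_left _ _
    have hhinge_le : ∀ j : Fin n, max 0 (1 - y j * ⟪w, x j⟫) ≤ 1 + L := by
      intro j
      apply max_le (by linarith)
      have habs : |⟪w, x j⟫| ≤ ‖w‖ * ‖x j‖ := abs_real_inner_le_norm w (x j)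
      have hyabs : |y j| = 1 := by rcases hy j with h | h <;> simp [h]
      have : |y j * ⟪w, x j⟫| ≤ L := by
        rw [abs_mul, hyabs, one_mul]
        calc |⟪w, x j⟫| ≤ ‖w‖ * ‖x j‖ := habs
          _ ≤ L * 1 := by
              apply mul_le_mul hw1 (hx j) (norm_nonneg _) (le_of_lt hL)
          _ = L := mul_one L
      have := abs_le.mp this
      linarith [this.1, this.2]
    have hDsplit : D = ‖w‖ ^ 2 + C * ∑ j, max 0 (1 - y j * ⟪w, x j⟫) := by
      rw [hDdef, Finset.sum_add_distrib, Finset.sum_const, Finset.mul_sum]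
      simp [Finset.card_univ]
      field_simp
    have hsum_nn : 0 ≤ ∑ j, max 0 (1 - y j * ⟪w, x j⟫) :=
      Finset.sum_nonneg fun j _ => hhinge_nn j
    have hD1 : C * ((n : ℝ) / L) ≤ D := by
      rw [hDsplit]
      nlinarith [sq_nonneg ‖w‖, mul_le_mul_of_nonneg_left hw2 (le_of_lt hC)]
    have hDpos : 0 < D := lt_of_lt_of_le (by positivity) hD1
    have hnormD : ‖w‖ ^ 2 ≤ D := by
      rw [hDsplit]
      nlinarith
    rw [div_le_iff₀ hDpos]
    have hA : ‖w‖ ^ 2 / n ≤ D / n := by gcongr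
    have hBcalc : C * max 0 (1 - y i * ⟪w, x i⟫) ≤ ((1 + L) * L / n) * D := by
      calc C * max 0 (1 - y i * ⟪w, x i⟫) ≤ C * (1 + L) := by
            apply mul_le_mul_of_nonneg_left (hhinge_le i) (le_of_lt hC)
        _ = ((1 + L) * L / n) * (C * ((n : ℝ) / L)) := by field_simp
        _ ≤ ((1 + L) * L / n) * D := by
            apply mul_le_mul_of_nonneg_left hD1 (by positivity)
    have : ‖w‖ ^ 2 / n + C * max 0 (1 - y i * ⟪w, x i⟫) ≤ D / n + ((1 + L) * L / n) * D :=
      add_le_add hA hBcalc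
    calc ‖w‖ ^ 2 / n + C * max 0 (1 - y i * ⟪w, x i⟫)
        ≤ D / n + ((1 + L) * L / n) * D := this
      _ = B * D := by rw [hBdef]; field_simp
  calc (∑ i, sSup ((fun w => (‖w‖ ^ 2 / n + C * max 0 (1 - y i * ⟪w, x i⟫)) /
          (∑ j, (‖w‖ ^ 2 / n + C * max 0 (1 - y j * ⟪w, x j⟫)))) '' Q))
      ≤ ∑ _i : Fin n, B := Finset.sum_le_sum fun i _ => key i
    _ = n * B := by rw [Finset.sum_const, Finset.card_univ]; simp [nsmul_eq_mul]
    _ = 1 + (1 + L) * L := by rw [hBdef]; field_simp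
    _ ≤ 7 * L ^ 2 := by nlinarith
end

section
/- Fix n ≥ 2, a regularization parameter C > 0, labeled points p_j = (x_j, y_j) ∈ ℝ^d × {-1, 1} for j ∈ [n], and any classifier w ∈ ℝ^d with Σ_{j ∈ [n]} max{0, 1 - y_j⟨w, x_j⟩} > 0. Then for every i ∈ [n], f̃(p_i, w) / (Σ_{j ∈ [n]} f̃(p_j, w)) ≤ 1/n + max{0, 1 - y_i⟨w, x_i⟩} / (Σ_{j ∈ [n]} max{0, 1 - y_j⟨w, x_j⟩}), i.e., the ratio of the contribution of a point to the full SVM objective splits into the uniform term 1/n plus the point's share of the total hinge loss, with the regularization parameter C cancelling out. -/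
open scoped RealInnerProductSpace

/-- The ratio of the contribution of a point to the full SVM objective splits
into the uniform term `1/n` plus the point's share of the total hinge loss. -/
theorem svm_ratio_split (d n : ℕ) (hn : 2 ≤ n) (C : ℝ) (hC : 0 < C)
    (x : Fin n → EuclideanSpace ℝ (Fin d)) (y : Fin n → ℝ)
    (hy : ∀ j, y j = -1 ∨ y j = 1)
    (w : EuclideanSpace ℝ (Fin d))
    (hloss : 0 < ∑ j, max 0 (1 - y j * ⟪w, x j⟫)) (i : Fin n) :
    (‖w‖ ^ 2 / n + C * max 0 (1 - y i * ⟪w, x i⟫)) /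
        (∑ j, (‖w‖ ^ 2 / n + C * max 0 (1 - y j * ⟪w, x j⟫))) ≤
      1 / n + max 0 (1 - y i * ⟪w, x i⟫) /
        (∑ j, max 0 (1 - y j * ⟪w, x j⟫)) := by
  set A : ℝ := ‖w‖ ^ 2 with hA
  set h : Fin n → ℝ := fun j => max 0 (1 - y j * ⟪w, x j⟫) with hh
  set S : ℝ := ∑ j, h j with hS
  have hA0 : 0 ≤ A := by positivity
  have hn0 : (0:ℝ) < n := by positivity
  have hi0 : 0 ≤ h i := le_max_left _ _
  have hsum : ∑ j, (A / n + C * h j) = A + C * S := by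
    rw [Finset.sum_add_distrib, Finset.sum_const, ← Finset.mul_sum,
      Finset.card_univ, Fintype.card_fin, ← hS]
    rw [nsmul_eq_mul]
    field_simp
  rw [hsum]
  have hden : 0 < A + C * S := by
    have := mul_pos hC hloss
    linarith
  rw [div_le_iff₀ hden]
  have hexp : (1 / n + h i / S) * (A + C * S)
      = A / n + C * S / n + h i * A / S + C * h i := by
    field_simp
    ring
  rw [hexp]
  have h1 : 0 ≤ C * S / n := by positivity
  have h2 : 0 ≤ h i * A / S := by positivity
  linarith
end
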